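/- Let n ≥ 5 with gcd(n,3) = 1, and let A = !![a₁,a₂,a₃; b₁,b₂,b₃; c₁,c₂,c₃] be a real 3×3 matrix with D := det A ≠ 0. Let (xᵢ,yᵢ,pᵢ,qᵢ) ∈ ℝ⁴ for i = 1,…,n with hᵢ := c₁xᵢ+c₂yᵢ+c₃ ≠ 0 and Δ₁₂₃ ≠ 0, Δ₁₂₄ ≠ 0, and let (x̃ᵢ,ỹᵢ,p̃ᵢ,q̃ᵢ) be the prolonged transform of the i-th data. Then zₙ := (∏_{i=5}^{n} Δ₁₂ᵢ)³·(Δ₁₃₄Δ₂₃₄)^{n−3}/(Δ₁₂₃Δ₁₂₄)^{2n−9} is a relative invariant of weight −1 for the diagonal action on n points: z̃ₙ = ((∏_{i=1}^{n} hᵢ)³/Dⁿ) · zₙ, where z̃ₙ is computed from the transformed data. -/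

import Mathlib

/-!
The transformed covector `h • ℓ ᵥ* A⁻¹` still annihilates the transformed point
`h⁻¹ • A *ᵥ (x, y, 1)`, and a covector annihilating `(X, Y, 1)` is the gradient line of its first
two coordinates at `(X, Y)`. Hence the transformed gradient lines are the rows `hᵢ • ℓᵢ ᵥ* A⁻¹`,
and every bracket `Δᵢⱼₖ` is multiplied by `hᵢhⱼhₖ / D`. In `zₙ` each of the indices `1, …, n`
occurs with signed multiplicity `3` and the brackets with signed multiplicity `n`, which gives the
factor `(∏ hᵢ)³ / Dⁿ`.
-/

open Matrix

/-- The gradient line `ℓ = (p, q, -p*x - q*y)` of the data `(x, y, p, q)`. -/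
noncomputable def gradLine (x y p q : ℝ) : Fin 3 → ℝ := ![p, q, -(p * x) - q * y]

/-- `Δᵢⱼₖ`: the determinant of the 3×3 matrix whose rows are the gradient lines of the
points `i, j, k` of the configuration `(x, y, p, q)`. -/
noncomputable def Delta3 (x y p q : ℕ → ℝ) (i j k : ℕ) : ℝ :=
  Matrix.det (Matrix.of
    ![gradLine (x i) (y i) (p i) (q i),
      gradLine (x j) (y j) (p j) (q j),
      gradLine (x k) (y k) (p k) (q k)])

theorem gradLine_dotProduct_self (x y p q : ℝ) : gradLine x y p q ⬝ᵥ ![x, y, 1] = 0 := by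
  simp [gradLine, dotProduct, Fin.sum_univ_three]

theorem gradLine_eq_of_dotProduct_eq_zero {w : Fin 3 → ℝ} {x y : ℝ}
    (hw : w ⬝ᵥ ![x, y, 1] = 0) : gradLine x y (w 0) (w 1) = w := by
  simp only [dotProduct, Fin.sum_univ_three, cons_val_zero, cons_val_one, cons_val_two,
    head_cons, tail_cons, mul_one] at hw
  ext j
  fin_cases j
  · rfl
  · rfl
  · simp only [gradLine, Fin.isValue, Fin.reduceFinMk, cons_val]
    linear_combination -hw

theorem gradLine_eq_smul_vecMul_inv {A : Matrix (Fin 3) (Fin 3) ℝ} (hA : IsUnit A.det)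
    {x y p q X Y h : ℝ} (hv : A *ᵥ ![x, y, 1] = ![X, Y, h]) (hh : h ≠ 0) :
    gradLine (X / h) (Y / h) ((h • gradLine x y p q ᵥ* A⁻¹) 0)
      ((h • gradLine x y p q ᵥ* A⁻¹) 1) = h • gradLine x y p q ᵥ* A⁻¹ := by
  apply gradLine_eq_of_dotProduct_eq_zero
  have hpt : ![X / h, Y / h, 1] = h⁻¹ • A *ᵥ ![x, y, 1] := by
    rw [hv]
    ext j
    fin_cases j <;> simp [div_eq_inv_mul, hh]
  rw [hpt, smul_dotProduct, dotProduct_smul, dotProduct_mulVec, vecMul_vecMul,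
    nonsing_inv_mul A hA, vecMul_one, gradLine_dotProduct_self]
  simp

theorem det_of_smul_vecMul_inv {K n : Type*} [Field K] [Fintype n] [DecidableEq n]
    (A L : Matrix n n K) (h : n → K) :
    det (of fun i => h i • L i ᵥ* A⁻¹) = (∏ i, h i) / A.det * L.det := by
  have : of (fun i => h i • L i ᵥ* A⁻¹) = diagonal h * L * A⁻¹ := by
    ext i j
    rw [Matrix.mul_assoc, diagonal_mul, of_apply, Pi.smul_apply, smul_eq_mul,
      mul_apply_eq_vecMul]
  rw [this, det_mul, det_mul, det_diagonal, det_nonsing_inv, Ring.inverse_eq_inv']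
  ring

theorem Delta3_eq_of_gradLine_eq {x y p q xt yt pt qt H : ℕ → ℝ}
    {A : Matrix (Fin 3) (Fin 3) ℝ} {i j k : ℕ}
    (hi : gradLine (xt i) (yt i) (pt i) (qt i) = H i • gradLine (x i) (y i) (p i) (q i) ᵥ* A⁻¹)
    (hj : gradLine (xt j) (yt j) (pt j) (qt j) = H j • gradLine (x j) (y j) (p j) (q j) ᵥ* A⁻¹)
    (hk : gradLine (xt k) (yt k) (pt k) (qt k) = H k • gradLine (x k) (y k) (p k) (q k) ᵥ* A⁻¹) :
    Delta3 xt yt pt qt i j k = H i * H j * H k / A.det * Delta3 x y p q i j k := by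
  have hrows : of ![gradLine (xt i) (yt i) (pt i) (qt i), gradLine (xt j) (yt j) (pt j) (qt j),
      gradLine (xt k) (yt k) (pt k) (qt k)] = of fun r => ![H i, H j, H k] r •
        of ![gradLine (x i) (y i) (p i) (q i), gradLine (x j) (y j) (p j) (q j),
          gradLine (x k) (y k) (p k) (q k)] r ᵥ* A⁻¹ := by
    ext r c
    fin_cases r
    exacts [congrFun hi c, congrFun hj c, congrFun hk c]
  rw [Delta3, hrows, det_of_smul_vecMul_inv, Fin.prod_univ_three]
  rfl

/-- `zₙ` as a function of the triple brackets: the paper's `zₙ` is `zn (Delta3 x y p q) n`. -/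
noncomputable def zn (Δ : ℕ → ℕ → ℕ → ℝ) (n : ℕ) : ℝ :=
  (∏ i ∈ Finset.Icc 5 n, Δ 1 2 i) ^ 3 * (Δ 1 3 4 * Δ 2 3 4) ^ (n - 3) /
    (Δ 1 2 3 * Δ 1 2 4) ^ (2 * n - 9)

theorem prod_Icc_one_eq_mul_prod_Icc_five {M : Type*} [CommMonoid M] (f : ℕ → M) {n : ℕ}
    (hn : 4 ≤ n) :
    ∏ i ∈ Finset.Icc 1 n, f i = f 1 * f 2 * f 3 * f 4 * ∏ i ∈ Finset.Icc 5 n, f i := by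
  rw [← Finset.mul_prod_Ioc_eq_prod_Icc (by omega), ← Finset.Icc_add_one_left_eq_Ioc,
    ← Finset.mul_prod_Ioc_eq_prod_Icc (by omega), ← Finset.Icc_add_one_left_eq_Ioc,
    ← Finset.mul_prod_Ioc_eq_prod_Icc (by omega), ← Finset.Icc_add_one_left_eq_Ioc,
    ← Finset.mul_prod_Ioc_eq_prod_Icc (by omega), ← Finset.Icc_add_one_left_eq_Ioc]
  simp only [mul_assoc]
  rfl

theorem zn_eq_of_Delta_eq {n : ℕ} (hn : 5 ≤ n) {Δ Δ' : ℕ → ℕ → ℕ → ℝ} {H : ℕ → ℝ} {D : ℝ}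
    (hD : D ≠ 0) (hH : ∀ i ∈ Finset.Icc 1 4, H i ≠ 0)
    (hΔ : ∀ i ∈ Finset.Icc 1 n, ∀ j ∈ Finset.Icc 1 n, ∀ k ∈ Finset.Icc 1 n,
      Δ' i j k = H i * H j * H k / D * Δ i j k) :
    zn Δ' n = (∏ i ∈ Finset.Icc 1 n, H i) ^ 3 / D ^ n * zn Δ n := by
  obtain ⟨m, rfl⟩ : ∃ m, n = m + 5 := ⟨n - 5, by omega⟩
  have mem : ∀ i, 1 ≤ i → i ≤ m + 5 → i ∈ Finset.Icc 1 (m + 5) :=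
    fun i h1 h2 => Finset.mem_Icc.2 ⟨h1, h2⟩
  have m1 := mem 1 le_rfl (by omega)
  have m2 := mem 2 one_le_two (by omega)
  have m3 := mem 3 (by omega) (by omega)
  have m4 := mem 4 (by omega) (by omega)
  have hprod : ∏ i ∈ Finset.Icc 5 (m + 5), Δ' 1 2 i
      = (H 1 * H 2 / D) ^ (m + 1) * (∏ i ∈ Finset.Icc 5 (m + 5), H i) *
        ∏ i ∈ Finset.Icc 5 (m + 5), Δ 1 2 i := by
    calc ∏ i ∈ Finset.Icc 5 (m + 5), Δ' 1 2 i
        = ∏ i ∈ Finset.Icc 5 (m + 5), H 1 * H 2 / D * H i * Δ 1 2 i := by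
          refine Finset.prod_congr rfl fun i hi => ?_
          rw [Finset.mem_Icc] at hi
          rw [hΔ 1 m1 2 m2 i (mem i (by omega) hi.2)]
          ring
      _ = _ := by
          rw [Finset.prod_mul_distrib, Finset.prod_mul_distrib, Finset.prod_const,
            Nat.card_Icc, show m + 5 + 1 - 5 = m + 1 by omega]
  have hfactor : ∀ s t u P E F : ℝ, (s * P) ^ 3 * (t * E) ^ (m + 2) / (u * F) ^ (2 * m + 1)
      = s ^ 3 * t ^ (m + 2) / u ^ (2 * m + 1) * (P ^ 3 * E ^ (m + 2) / F ^ (2 * m + 1)) :=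
    fun s t u P E F => by rw [mul_pow, mul_pow, mul_pow, mul_mul_mul_comm, mul_div_mul_comm]
  rw [zn, zn, hprod, hΔ 1 m1 3 m3 4 m4, hΔ 2 m2 3 m3 4 m4, hΔ 1 m1 2 m2 3 m3, hΔ 1 m1 2 m2 4 m4,
    show m + 5 - 3 = m + 2 by omega, show 2 * (m + 5) - 9 = 2 * m + 1 by omega,
    mul_mul_mul_comm _ (Δ 1 3 4), mul_mul_mul_comm _ (Δ 1 2 3), hfactor,
    prod_Icc_one_eq_mul_prod_Icc_five H (by omega)]
  congr 1
  have h1 := hH 1 (by decide)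
  have h2 := hH 2 (by decide)
  have h3 := hH 3 (by decide)
  have h4 := hH 4 (by decide)
  rw [div_eq_iff (by simp [h1, h2, h3, h4, hD])]
  ring

theorem zn_relative_invariant_coprime_case_general (n : ℕ) (hn : 5 ≤ n)
    (a1 a2 a3 b1 b2 b3 c1 c2 c3 : ℝ)
    (hD : Matrix.det !![a1, a2, a3; b1, b2, b3; c1, c2, c3] ≠ 0)
    (x y p q : ℕ → ℝ)
    (hh : ∀ i ∈ Finset.Icc 1 n, c1 * x i + c2 * y i + c3 ≠ 0)
    (xt yt pt qt : ℕ → ℝ)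
    (hxt : ∀ i ∈ Finset.Icc 1 n,
      xt i = (a1 * x i + a2 * y i + a3) / (c1 * x i + c2 * y i + c3))
    (hyt : ∀ i ∈ Finset.Icc 1 n,
      yt i = (b1 * x i + b2 * y i + b3) / (c1 * x i + c2 * y i + c3))
    (hpt : ∀ i ∈ Finset.Icc 1 n, pt i = ((c1 * x i + c2 * y i + c3) •
      Matrix.vecMul (gradLine (x i) (y i) (p i) (q i))
        (!![a1, a2, a3; b1, b2, b3; c1, c2, c3])⁻¹) 0)
    (hqt : ∀ i ∈ Finset.Icc 1 n, qt i = ((c1 * x i + c2 * y i + c3) •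
      Matrix.vecMul (gradLine (x i) (y i) (p i) (q i))
        (!![a1, a2, a3; b1, b2, b3; c1, c2, c3])⁻¹) 1) :
    (∏ i ∈ Finset.Icc 5 n, Delta3 xt yt pt qt 1 2 i) ^ 3 *
        (Delta3 xt yt pt qt 1 3 4 * Delta3 xt yt pt qt 2 3 4) ^ (n - 3) /
        (Delta3 xt yt pt qt 1 2 3 * Delta3 xt yt pt qt 1 2 4) ^ (2 * n - 9)
      = ((∏ i ∈ Finset.Icc 1 n, (c1 * x i + c2 * y i + c3)) ^ 3 /
            Matrix.det !![a1, a2, a3; b1, b2, b3; c1, c2, c3] ^ n) *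
        ((∏ i ∈ Finset.Icc 5 n, Delta3 x y p q 1 2 i) ^ 3 *
          (Delta3 x y p q 1 3 4 * Delta3 x y p q 2 3 4) ^ (n - 3) /
          (Delta3 x y p q 1 2 3 * Delta3 x y p q 1 2 4) ^ (2 * n - 9)) := by
  have hrow : ∀ i ∈ Finset.Icc 1 n, gradLine (xt i) (yt i) (pt i) (qt i) =
      (c1 * x i + c2 * y i + c3) • gradLine (x i) (y i) (p i) (q i) ᵥ*
        (!![a1, a2, a3; b1, b2, b3; c1, c2, c3])⁻¹ := by
    intro i hi
    rw [hxt i hi, hyt i hi, hpt i hi, hqt i hi]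
    refine gradLine_eq_smul_vecMul_inv (isUnit_iff_ne_zero.2 hD) ?_ (hh i hi)
    ext j
    fin_cases j <;> simp [mulVec, dotProduct, Fin.sum_univ_three]
  exact zn_eq_of_Delta_eq hn hD (fun i hi => hh i (Finset.Icc_subset_Icc_right (by omega) hi))
    fun i hi j hj k hk => Delta3_eq_of_gradLine_eq (H := fun i => c1 * x i + c2 * y i + c3)
      (hrow i hi) (hrow j hj) (hrow k hk)

/-- For `n ≥ 5` with `gcd(n,3) = 1`, the quantity
`zₙ = (∏_{i=5}^{n} Δ₁₂ᵢ)³ (Δ₁₃₄Δ₂₃₄)^{n−3} / (Δ₁₂₃Δ₁₂₄)^{2n−9}` is a relative invariant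
of weight `−1`: `z̃ₙ = ((∏ᵢ hᵢ)³ / Dⁿ) · zₙ`. -/
theorem zn_relative_invariant_coprime_case (n : ℕ) (hn : 5 ≤ n) (hg : Nat.gcd n 3 = 1)
    (a1 a2 a3 b1 b2 b3 c1 c2 c3 : ℝ)
    (hD : Matrix.det !![a1, a2, a3; b1, b2, b3; c1, c2, c3] ≠ 0)
    (x y p q : ℕ → ℝ)
    (hh : ∀ i ∈ Finset.Icc 1 n, c1 * x i + c2 * y i + c3 ≠ 0)
    (h123 : Delta3 x y p q 1 2 3 ≠ 0)
    (h124 : Delta3 x y p q 1 2 4 ≠ 0)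
    (xt yt pt qt : ℕ → ℝ)
    (hxt : ∀ i ∈ Finset.Icc 1 n,
      xt i = (a1 * x i + a2 * y i + a3) / (c1 * x i + c2 * y i + c3))
    (hyt : ∀ i ∈ Finset.Icc 1 n,
      yt i = (b1 * x i + b2 * y i + b3) / (c1 * x i + c2 * y i + c3))
    (hpt : ∀ i ∈ Finset.Icc 1 n, pt i = ((c1 * x i + c2 * y i + c3) •
      Matrix.vecMul (gradLine (x i) (y i) (p i) (q i))
        (!![a1, a2, a3; b1, b2, b3; c1, c2, c3])⁻¹) 0)
    (hqt : ∀ i ∈ Finset.Icc 1 n, qt i = ((c1 * x i + c2 * y i + c3) •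
      Matrix.vecMul (gradLine (x i) (y i) (p i) (q i))
        (!![a1, a2, a3; b1, b2, b3; c1, c2, c3])⁻¹) 1) :
    (∏ i ∈ Finset.Icc 5 n, Delta3 xt yt pt qt 1 2 i) ^ 3 *
        (Delta3 xt yt pt qt 1 3 4 * Delta3 xt yt pt qt 2 3 4) ^ (n - 3) /
        (Delta3 xt yt pt qt 1 2 3 * Delta3 xt yt pt qt 1 2 4) ^ (2 * n - 9)
      = ((∏ i ∈ Finset.Icc 1 n, (c1 * x i + c2 * y i + c3)) ^ 3 /
            Matrix.det !![a1, a2, a3; b1, b2, b3; c1, c2, c3] ^ n) *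
        ((∏ i ∈ Finset.Icc 5 n, Delta3 x y p q 1 2 i) ^ 3 *
          (Delta3 x y p q 1 3 4 * Delta3 x y p q 2 3 4) ^ (n - 3) /
          (Delta3 x y p q 1 2 3 * Delta3 x y p q 1 2 4) ^ (2 * n - 9)) :=
  zn_relative_invariant_coprime_case_general n hn a1 a2 a3 b1 b2 b3 c1 c2 c3 hD x y p q hh xt yt pt
    qt hxt hyt hpt hqt
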